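/- arXiv:2203.04495 — 3 statements merged into one kernel-verified Lean document; each statement's English description precedes it below -/
import Mathlib

section
/- Let p > 1 and let Q : ℝ → ℝ be a positive function in H^1(ℝ) solving -Q'' + Q = Q^p. Then the Pohozaev identities hold: (1/(p+3)) ∫ Q² dx = (1/(p-1)) ∫ (Q')² dx = (1/(2(p+1))) ∫ Q^{p+1} dx. -/
open Real MeasureTheory Filter

theorem pohozaev_identity (p : ℝ) (hp : 1 < p) (Q : ℝ → ℝ)
    (hpos : ∀ x, 0 < Q x)
    (hsmooth : ContDiff ℝ 2 Q)
    (hL2 : Integrable (fun x => (Q x)^2))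
    (hL2' : Integrable (fun x => (deriv Q x)^2))
    (hLp : Integrable (fun x => (Q x)^(p+1)))
    (hdecay_top : Tendsto Q atTop (nhds 0))
    (hdecay_bot : Tendsto Q atBot (nhds 0))
    (hdecay_top' : Tendsto (deriv Q) atTop (nhds 0))
    (hdecay_bot' : Tendsto (deriv Q) atBot (nhds 0))
    (heq : ∀ x, -(deriv (deriv Q) x) + Q x - (Q x)^p = 0) :
    (1/(p+3)) * ∫ x, (Q x)^2 = (1/(p-1)) * ∫ x, (deriv Q x)^2 ∧
    (1/(p-1)) * ∫ x, (deriv Q x)^2 = (1/(2*(p+1))) * ∫ x, (Q x)^(p+1) := by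
  have hp1 : p + 1 ≠ 0 := by linarith
  have hQeq : ∀ x, deriv (deriv Q) x = Q x - (Q x)^p := by
    intro x; have := heq x; linarith
  have h2 : ContDiff ℝ (1+1) Q := by rw [one_add_one_eq_two]; exact hsmooth
  have hQdiff : Differentiable ℝ Q := hsmooth.differentiable (by norm_num)
  have hQ'diff : Differentiable ℝ (deriv Q) :=
    ((contDiff_succ_iff_deriv.mp h2).2.2.differentiable (by norm_num))
  have hQ : ∀ x, HasDerivAt Q (deriv Q x) x := fun x => (hQdiff x).hasDerivAt
  have hQ' : ∀ x, HasDerivAt (deriv Q) (deriv (deriv Q) x) x := fun x => (hQ'diff x).hasDerivAt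
  -- derivative of rpow
  have hrpow : ∀ x, HasDerivAt (fun y => (Q y)^(p+1)) ((p+1) * (Q x)^p * deriv Q x) x := by
    intro x
    have h := (hQ x).rpow_const (p := p+1) (Or.inl (hpos x).ne')
    rw [add_sub_cancel_right] at h
    convert h using 1
    ring
  -- energy function E is constant, equal to 0
  set E : ℝ → ℝ := fun x => (deriv Q x)^2 - (Q x)^2 + (2/(p+1)) * (Q x)^(p+1) with hEdef
  have hE : ∀ x, HasDerivAt E 0 x := by
    intro x
    have h := (((hQ' x).pow 2).sub ((hQ x).pow 2)).add ((hrpow x).const_mul (2/(p+1)))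
    refine h.congr_deriv (Eq.symm ?_)
    rw [hQeq x]
    field_simp
    ring
  have hEconst : ∀ x, E x = E 0 := fun x =>
    is_const_of_deriv_eq_zero (fun y => (hE y).differentiableAt) (fun y => (hE y).deriv) x 0
  have hrpow_tendsto : Tendsto (fun x => (Q x)^(p+1)) atTop (nhds 0) := by
    have hc : ContinuousAt (fun y : ℝ => y ^ (p+1)) 0 :=
      Real.continuousAt_rpow_const 0 (p+1) (Or.inr (by linarith))
    have := hc.tendsto.comp hdecay_top
    simpa [Function.comp_def, Real.zero_rpow hp1] using this
  have hEtop : Tendsto E atTop (nhds 0) := by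
    have h := ((hdecay_top'.pow 2).sub (hdecay_top.pow 2)).add (hrpow_tendsto.const_mul (2/(p+1)))
    simpa using h
  have hE0 : E 0 = 0 := by
    have h1 : Tendsto E atTop (nhds (E 0)) := by
      have : E = fun _ => E 0 := funext fun x => hEconst x
      rw [this]; exact tendsto_const_nhds
    exact tendsto_nhds_unique h1 hEtop
  have hEzero : ∀ x, (deriv Q x)^2 = (Q x)^2 - (2/(p+1)) * (Q x)^(p+1) := by
    intro x
    have := hEconst x
    rw [hE0] at this
    simp only [hEdef] at this
    linarith
  -- second relation: ∫ Q'^2 = ∫ Q^2 - 2/(p+1) ∫ Q^(p+1)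
  have hInt2 : ∫ x, (deriv Q x)^2 =
      (∫ x, (Q x)^2) - (2/(p+1)) * ∫ x, (Q x)^(p+1) := by
    calc ∫ x, (deriv Q x)^2 = ∫ x, ((Q x)^2 - (2/(p+1)) * (Q x)^(p+1)) := by
          exact integral_congr_ae (Eventually.of_forall hEzero)
      _ = (∫ x, (Q x)^2) - (2/(p+1)) * ∫ x, (Q x)^(p+1) := by
          rw [integral_sub hL2 (hLp.const_mul _), MeasureTheory.integral_const_mul]
  -- first relation via FTC on Q * Q'
  have hG : ∀ x, HasDerivAt (fun y => Q y * deriv Q y)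
      ((deriv Q x)^2 + (Q x)^2 - (Q x)^(p+1)) x := by
    intro x
    have h := (hQ x).mul (hQ' x)
    refine h.congr_deriv (Eq.symm ?_)
    rw [hQeq x, Real.rpow_add_one (hpos x).ne' p]
    ring
  have hGint : Integrable (fun x => (deriv Q x)^2 + (Q x)^2 - (Q x)^(p+1)) :=
    (hL2'.add hL2).sub hLp
  have hGtop : Tendsto (fun x => Q x * deriv Q x) atTop (nhds 0) := by
    simpa using hdecay_top.mul hdecay_top'
  have hGbot : Tendsto (fun x => Q x * deriv Q x) atBot (nhds 0) := by
    simpa using hdecay_bot.mul hdecay_bot'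
  have hInt1 : (∫ x, (deriv Q x)^2) + (∫ x, (Q x)^2) - (∫ x, (Q x)^(p+1)) = 0 := by
    have h := integral_of_hasDerivAt_of_tendsto hG hGint hGbot hGtop
    rw [sub_zero] at h
    have hadd : Integrable (fun x => (deriv Q x)^2 + (Q x)^2) := hL2'.add hL2
    rw [← integral_add hL2' hL2, ← integral_sub hadd hLp]
    exact h
  set A := ∫ x, (Q x)^2
  set B := ∫ x, (deriv Q x)^2
  set C := ∫ x, (Q x)^(p+1)
  have e2 : B * (p+1) = A * (p+1) - 2 * C := by
    have := hInt2
    field_simp at this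
    linarith
  constructor
  · have h1 : A * (p-1) = B * (p+3) := by linear_combination -e2 - 2 * hInt1
    rw [div_mul_eq_mul_div, div_mul_eq_mul_div, div_eq_div_iff (by linarith) (by linarith)]
    linear_combination h1
  · have h2' : B * (2*(p+1)) = C * (p-1) := by linear_combination e2 + (p+1) * hInt1
    rw [div_mul_eq_mul_div, div_mul_eq_mul_div, div_eq_div_iff (by linarith) (by nlinarith)]
    linear_combination h2'
end

section
/- Let Q(x) = ((p+1)/2)^{1/(p-1)}(cosh((p-1)x/2))^{-2/(p-1)} with p > 5 and α > 0. Then there exist constants c, C > 0 such that for all y > 0: c(1+y)e^{-2αy} ≤ ∫_ℝ Q(x-y)^α Q(x+y)^α dx ≤ C(1+y)e^{-2αy}. -/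
open Real MeasureTheory Set

/-- The explicit 1d ground state. -/
noncomputable def Qgs (p x : ℝ) : ℝ :=
  ((p+1)/2) ^ ((1:ℝ)/(p-1)) * (Real.cosh ((p-1)*x/2)) ^ (-(2/(p-1)))

lemma exp_abs_le_two_mul_cosh (t : ℝ) : Real.exp |t| ≤ 2 * Real.cosh t := by
  rcases abs_cases t with ⟨h, _⟩ | ⟨h, _⟩ <;> rw [Real.cosh_eq, h] <;>
    nlinarith [Real.exp_pos t, Real.exp_pos (-t)]

lemma cosh_le_exp_abs (t : ℝ) : Real.cosh t ≤ Real.exp |t| := by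
  have h1 : Real.exp t ≤ Real.exp |t| := Real.exp_le_exp.2 (le_abs_self t)
  have h2 : Real.exp (-t) ≤ Real.exp |t| := Real.exp_le_exp.2 (neg_le_abs t)
  rw [Real.cosh_eq]; linarith

section
variable {p : ℝ} (hp : 5 < p)
include hp

lemma abs_aux (x : ℝ) : |(p-1)*x/2| = (p-1)/2 * |x| := by
  have hp1 : (0:ℝ) < p - 1 := by linarith
  rw [abs_div, abs_mul, abs_of_pos hp1, abs_two]; ring

lemma le_Qgs (x : ℝ) :
    ((p+1)/2) ^ ((1:ℝ)/(p-1)) * Real.exp (-|x|) ≤ Qgs p x := by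
  have hp1 : (0:ℝ) < p - 1 := by linarith
  have hK : (0:ℝ) < ((p+1)/2) ^ ((1:ℝ)/(p-1)) :=
    Real.rpow_pos_of_pos (by linarith) _
  set t := (p-1)*x/2 with ht
  have h1 : Real.exp |t| ^ (-(2/(p-1))) ≤ Real.cosh t ^ (-(2/(p-1))) :=
    Real.rpow_le_rpow_of_nonpos (Real.cosh_pos t) (cosh_le_exp_abs t)
      (neg_nonpos.2 (by positivity))
  have h2 : Real.exp |t| ^ (-(2/(p-1))) = Real.exp (-|x|) := by
    rw [Real.rpow_def_of_pos (Real.exp_pos _), Real.log_exp, abs_aux hp]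
    congr 1
    field_simp
  rw [Qgs, ← h2]
  exact mul_le_mul_of_nonneg_left h1 hK.le

lemma Qgs_le (x : ℝ) :
    Qgs p x ≤ ((p+1)/2) ^ ((1:ℝ)/(p-1)) * (2 ^ (2/(p-1)) * Real.exp (-|x|)) := by
  have hp1 : (0:ℝ) < p - 1 := by linarith
  have hK : (0:ℝ) < ((p+1)/2) ^ ((1:ℝ)/(p-1)) :=
    Real.rpow_pos_of_pos (by linarith) _
  set t := (p-1)*x/2 with ht
  have hlow : (0:ℝ) < Real.exp |t| / 2 := by positivity
  have h1 : Real.cosh t ^ (-(2/(p-1))) ≤ (Real.exp |t| / 2) ^ (-(2/(p-1))) := by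
    apply Real.rpow_le_rpow_of_nonpos hlow _ (neg_nonpos.2 (by positivity))
    rw [div_le_iff₀ (by norm_num : (0:ℝ) < 2), mul_comm]
    exact exp_abs_le_two_mul_cosh t
  have h2 : (Real.exp |t| / 2) ^ (-(2/(p-1))) = 2 ^ (2/(p-1)) * Real.exp (-|x|) := by
    rw [Real.rpow_neg hlow.le, Real.div_rpow (Real.exp_pos _).le (by norm_num), inv_div,
      div_eq_mul_inv, ← Real.rpow_neg (Real.exp_pos _).le,
      Real.rpow_def_of_pos (Real.exp_pos _), Real.log_exp]
    congr 1
    rw [abs_aux hp]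
    field_simp
  rw [Qgs]
  calc ((p+1)/2) ^ ((1:ℝ)/(p-1)) * Real.cosh t ^ (-(2/(p-1)))
      ≤ ((p+1)/2) ^ ((1:ℝ)/(p-1)) * (Real.exp |t| / 2) ^ (-(2/(p-1))) :=
        mul_le_mul_of_nonneg_left h1 hK.le
    _ = _ := by rw [h2]

lemma Qgs_pos (x : ℝ) : 0 < Qgs p x :=
  lt_of_lt_of_le (by positivity) (le_Qgs hp x)

omit hp in
lemma continuous_Qgs : Continuous (Qgs p) := by
  apply continuous_const.mul
  exact (Real.continuous_cosh.comp (by continuity)).rpow_const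
    (fun x => Or.inl (Real.cosh_pos _).ne')

end

lemma integrable_exp_neg_mul_abs {b : ℝ} (hb : 0 < b) :
    Integrable (fun x : ℝ => Real.exp (-b * |x|)) := by
  have hIoi : IntegrableOn (fun x : ℝ => Real.exp (-b * |x|)) (Ioi 0) := by
    apply (exp_neg_integrableOn_Ioi 0 hb).congr_fun _ measurableSet_Ioi
    intro x hx
    simp only []
    rw [abs_of_pos hx]
  rw [← integrableOn_univ, ← Set.Iic_union_Ioi (a := (0:ℝ)), integrableOn_union]
  refine ⟨?_, hIoi⟩
  rw [← (Measure.measurePreserving_neg (volume : Measure ℝ)).integrableOn_comp_preimage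
      (Homeomorph.neg ℝ).measurableEmbedding]
  simp only [Function.comp_def, abs_neg, neg_preimage, neg_Iic, neg_zero]
  rw [integrableOn_Ici_iff_integrableOn_Ioi]
  exact hIoi

lemma integral_exp_Ioi {b c : ℝ} (hb : 0 < b) :
    ∫ x in Ioi c, Real.exp (-(b * x)) = Real.exp (-(b * c)) / b := by
  have := integral_comp_mul_left_Ioi (fun u : ℝ => Real.exp (-u)) c hb
  simp only [smul_eq_mul] at this
  rw [this, integral_exp_neg_Ioi]
  rw [inv_mul_eq_div]

lemma integral_exp_Iic' {b c : ℝ} (hb : 0 < b) :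
    ∫ x in Iic (-c), Real.exp (b * x) = Real.exp (-(b * c)) / b := by
  have := integral_comp_neg_Iic (-c) (fun u : ℝ => Real.exp (-(b * u)))
  rw [neg_neg] at this
  simp only [mul_neg, neg_neg] at this
  rw [this, integral_exp_Ioi hb]

set_option maxHeartbeats 1000000 in
theorem cross_term_estimate_eq (p α : ℝ) (hp : 5 < p) (hα : 0 < α) :
    ∃ c C : ℝ, 0 < c ∧ 0 < C ∧ ∀ y : ℝ, 0 < y →
      c * (1 + y) * Real.exp (-2 * α * y)
          ≤ (∫ x, (Qgs p (x - y)) ^ α * (Qgs p (x + y)) ^ α) ∧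
      (∫ x, (Qgs p (x - y)) ^ α * (Qgs p (x + y)) ^ α)
          ≤ C * (1 + y) * Real.exp (-2 * α * y) := by
  have hp1 : (0:ℝ) < p - 1 := by linarith
  set K := ((p+1)/2) ^ ((1:ℝ)/(p-1)) with hKdef
  have hKpos : 0 < K := Real.rpow_pos_of_pos (by linarith) _
  have h2s : (0:ℝ) < 2 ^ (2/(p-1)) := Real.rpow_pos_of_pos (by norm_num) _
  set a := K ^ α with hadef
  set A := (K * 2 ^ (2/(p-1))) ^ α with hAdef
  have hapos : 0 < a := Real.rpow_pos_of_pos hKpos _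
  have hApos : 0 < A := Real.rpow_pos_of_pos (by positivity) _
  -- pointwise bounds
  have hQlb : ∀ u : ℝ, a * Real.exp (-(α * |u|)) ≤ (Qgs p u) ^ α := by
    intro u
    have h1 : (K * Real.exp (-|u|)) ^ α = a * Real.exp (-(α * |u|)) := by
      rw [Real.mul_rpow hKpos.le (Real.exp_pos _).le, ← Real.exp_mul, neg_mul, mul_comm |u| α]
    rw [← h1]
    exact Real.rpow_le_rpow (by positivity) (le_Qgs hp u) hα.le
  have hQub : ∀ u : ℝ, (Qgs p u) ^ α ≤ A * Real.exp (-(α * |u|)) := by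
    intro u
    have h1 : (K * 2 ^ (2/(p-1)) * Real.exp (-|u|)) ^ α = A * Real.exp (-(α * |u|)) := by
      rw [Real.mul_rpow (by positivity) (Real.exp_pos _).le, ← Real.exp_mul, neg_mul,
        mul_comm |u| α]
    rw [← h1]
    refine Real.rpow_le_rpow (Qgs_pos hp u).le ?_ hα.le
    rw [mul_assoc]
    exact Qgs_le hp u
  refine ⟨a ^ 2 * Real.exp (-2 * α), A ^ 2 * (2 + 1 / α),
    mul_pos (pow_pos hapos 2) (Real.exp_pos _),
    mul_pos (pow_pos hApos 2) (by positivity), fun y hy => ?_⟩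
  set f := fun x : ℝ => (Qgs p (x - y)) ^ α * (Qgs p (x + y)) ^ α with hfdef
  set E := fun x : ℝ => Real.exp (-(α * |x - y|)) * Real.exp (-(α * |x + y|)) with hEdef
  have hflb : ∀ x, a ^ 2 * E x ≤ f x := by
    intro x
    have := mul_le_mul (hQlb (x - y)) (hQlb (x + y))
      (mul_nonneg hapos.le (Real.exp_pos _).le) (Real.rpow_nonneg (Qgs_pos hp _).le _)
    calc a ^ 2 * E x = a * Real.exp (-(α * |x - y|)) * (a * Real.exp (-(α * |x + y|))) := by
          rw [hEdef]; ring
      _ ≤ f x := this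
  have hfub : ∀ x, f x ≤ A ^ 2 * E x := by
    intro x
    have := mul_le_mul (hQub (x - y)) (hQub (x + y))
      (Real.rpow_nonneg (Qgs_pos hp _).le _) (mul_nonneg hApos.le (Real.exp_pos _).le)
    calc f x ≤ A * Real.exp (-(α * |x - y|)) * (A * Real.exp (-(α * |x + y|))) := this
      _ = A ^ 2 * E x := by rw [hEdef]; ring
  have hfnn : ∀ x, 0 ≤ f x := fun x =>
    mul_nonneg (Real.rpow_nonneg (Qgs_pos hp _).le _) (Real.rpow_nonneg (Qgs_pos hp _).le _)
  -- integrability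
  have hg_int : Integrable (fun x : ℝ => Real.exp (-(α * |x - y|))) := by
    have := (integrable_exp_neg_mul_abs hα).comp_sub_right (g := y)
    simpa [neg_mul] using this
  have hEub : ∀ x, E x ≤ Real.exp (-(α * |x - y|)) := by
    intro x
    have h1 : Real.exp (-(α * |x + y|)) ≤ 1 :=
      Real.exp_le_one_iff.2 (neg_nonpos.2 (by positivity))
    calc E x = Real.exp (-(α * |x - y|)) * Real.exp (-(α * |x + y|)) := rfl
      _ ≤ Real.exp (-(α * |x - y|)) * 1 :=
          mul_le_mul_of_nonneg_left h1 (Real.exp_pos _).le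
      _ = _ := mul_one _
  have hEnn : ∀ x, 0 ≤ E x := fun x => by positivity
  have hE_int : Integrable E := by
    refine hg_int.mono' ?_ ?_
    · exact (((Real.continuous_exp.comp (by continuity)).mul
        (Real.continuous_exp.comp (by continuity)))).aestronglyMeasurable
    · filter_upwards with x
      rw [Real.norm_eq_abs, abs_of_nonneg (hEnn x)]
      exact hEub x
  have hf_cont : Continuous f := by
    apply Continuous.mul
    · exact (continuous_Qgs.comp (by continuity)).rpow_const
        (fun x => Or.inl (Qgs_pos hp _).ne')
    · exact (continuous_Qgs.comp (by continuity)).rpow_const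
        (fun x => Or.inl (Qgs_pos hp _).ne')
  have hf_int : Integrable f := by
    refine (hg_int.const_mul (A ^ 2)).mono' hf_cont.aestronglyMeasurable ?_
    filter_upwards with x
    rw [Real.norm_eq_abs, abs_of_nonneg (hfnn x)]
    exact le_trans (hfub x) (mul_le_mul_of_nonneg_left (hEub x) (by positivity))
  -- values of E on the three regions
  have hEmid : ∀ x ∈ Ioc (-y) y, E x = Real.exp (-(2 * α * y)) := by
    intro x hx
    rw [hEdef]
    simp only
    rw [abs_of_nonpos (by simp at hx; linarith [hx.1, hx.2] : x - y ≤ 0),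
      abs_of_nonneg (by simp at hx; linarith [hx.1] : (0:ℝ) ≤ x + y), ← Real.exp_add]
    congr 1
    ring
  have hEIoi : ∀ x ∈ Ioi y, E x = Real.exp (-(2 * α * x)) := by
    intro x hx
    simp only [mem_Ioi] at hx
    rw [hEdef]
    simp only
    rw [abs_of_nonneg (by linarith : (0:ℝ) ≤ x - y),
      abs_of_nonneg (by linarith : (0:ℝ) ≤ x + y), ← Real.exp_add]
    congr 1
    ring
  have hEIic : ∀ x ∈ Iic (-y), E x = Real.exp (2 * α * x) := by
    intro x hx
    simp only [mem_Iic] at hx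
    rw [hEdef]
    simp only
    rw [abs_of_nonpos (by linarith : x - y ≤ 0), abs_of_nonpos (by linarith : x + y ≤ 0),
      ← Real.exp_add]
    congr 1
    ring
  have hvol : (volume (Ioc (-y) y)).toReal = 2 * y := by
    rw [Real.volume_Ioc, ENNReal.toReal_ofReal (by linarith)]
    ring
  constructor
  · -- lower bound
    have hsub : Ioc (-y) y ∪ Ioc y (y + 1) = Ioc (-y) (y + 1) :=
      Ioc_union_Ioc_eq_Ioc (by linarith) (by linarith)
    have hint1 : (a ^ 2 * Real.exp (-(2 * α * y))) * (2 * y) ≤ ∫ x in Ioc (-y) y, f x := by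
      have := setIntegral_ge_of_const_le_real (μ := volume) (s := Ioc (-y) y) measurableSet_Ioc
        (by rw [Real.volume_Ioc]; exact ENNReal.ofReal_ne_top) (f := f) (c := a ^ 2 * Real.exp (-(2 * α * y)))
        (fun x hx => by rw [← hEmid x hx]; exact hflb x) hf_int.integrableOn
      rwa [measureReal_def, hvol] at this
    have hint2 : a ^ 2 * Real.exp (-(2 * α * (y + 1))) * 1 ≤ ∫ x in Ioc y (y + 1), f x := by
      have := setIntegral_ge_of_const_le_real (μ := volume) (s := Ioc y (y + 1)) measurableSet_Ioc
        (by rw [Real.volume_Ioc]; exact ENNReal.ofReal_ne_top) (f := f) (c := a ^ 2 * Real.exp (-(2 * α * (y + 1))))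
        (fun x hx => ?_) hf_int.integrableOn
      · rwa [measureReal_def, Real.volume_Ioc, ENNReal.toReal_ofReal (by linarith), show y + 1 - y = 1 by ring]
          at this
      · refine le_trans ?_ (hflb x)
        simp only [mem_Ioc] at hx
        rw [hEIoi x (by simpa using hx.1)]
        have h5 : Real.exp (-(2 * α * (y + 1))) ≤ Real.exp (-(2 * α * x)) := by
          apply Real.exp_le_exp.2
          have := mul_le_mul_of_nonneg_left hx.2 (show (0:ℝ) ≤ 2 * α by linarith)
          linarith
        exact mul_le_mul_of_nonneg_left h5 (sq_nonneg a)
    have hsplit : ∫ x in Ioc (-y) (y + 1), f x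
        = (∫ x in Ioc (-y) y, f x) + ∫ x in Ioc y (y + 1), f x := by
      rw [← hsub, setIntegral_union (Ioc_disjoint_Ioc_of_le le_rfl) measurableSet_Ioc
        hf_int.integrableOn hf_int.integrableOn]
    have hle : ∫ x in Ioc (-y) (y + 1), f x ≤ ∫ x, f x :=
      setIntegral_le_integral hf_int (Filter.Eventually.of_forall hfnn)
    have hexp : Real.exp (-(2 * α * (y + 1))) = Real.exp (-2 * α) * Real.exp (-(2 * α * y)) := by
      rw [← Real.exp_add]; congr 1; ring
    have key : a ^ 2 * Real.exp (-2 * α) * (1 + y) * Real.exp (-2 * α * y)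
        ≤ (a ^ 2 * Real.exp (-(2 * α * y))) * (2 * y) + a ^ 2 * Real.exp (-(2 * α * (y + 1))) * 1 := by
      rw [hexp, show Real.exp (-2 * α * y) = Real.exp (-(2 * α * y)) by congr 1; ring]
      have he1 : Real.exp (-2 * α) ≤ 1 := Real.exp_le_one_iff.2 (by linarith)
      have h4 : Real.exp (-2 * α) * (1 + y) ≤ 2 * y + Real.exp (-2 * α) := by
        have := mul_le_mul_of_nonneg_right he1 hy.le
        linarith
      calc a ^ 2 * Real.exp (-2 * α) * (1 + y) * Real.exp (-(2 * α * y))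
          = (a ^ 2 * Real.exp (-(2 * α * y))) * (Real.exp (-2 * α) * (1 + y)) := by ring
        _ ≤ (a ^ 2 * Real.exp (-(2 * α * y))) * (2 * y + Real.exp (-2 * α)) :=
            mul_le_mul_of_nonneg_left h4
              (mul_nonneg (sq_nonneg a) (Real.exp_pos _).le)
        _ = (a ^ 2 * Real.exp (-(2 * α * y))) * (2 * y)
            + a ^ 2 * (Real.exp (-2 * α) * Real.exp (-(2 * α * y))) * 1 := by ring
    calc a ^ 2 * Real.exp (-2 * α) * (1 + y) * Real.exp (-2 * α * y)
        ≤ (a ^ 2 * Real.exp (-(2 * α * y))) * (2 * y)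
            + a ^ 2 * Real.exp (-(2 * α * (y + 1))) * 1 := key
      _ ≤ ∫ x in Ioc (-y) (y + 1), f x := by rw [hsplit]; exact add_le_add hint1 hint2
      _ ≤ ∫ x, f x := hle
  · -- upper bound
    have hEIoi_int : ∫ x in Ioi y, E x = Real.exp (-(2 * α * y)) / (2 * α) := by
      rw [setIntegral_congr_fun measurableSet_Ioi hEIoi]
      have := integral_exp_Ioi (b := 2 * α) (c := y) (by positivity)
      simpa using this
    have hEIic_int : ∫ x in Iic (-y), E x = Real.exp (-(2 * α * y)) / (2 * α) := by
      rw [setIntegral_congr_fun measurableSet_Iic hEIic]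
      exact integral_exp_Iic' (b := 2 * α) (hb := by positivity)
    have hEmid_int : ∫ x in Ioc (-y) y, E x = 2 * y * Real.exp (-(2 * α * y)) := by
      rw [setIntegral_congr_fun measurableSet_Ioc hEmid, setIntegral_const, measureReal_def, hvol, smul_eq_mul]
    have hEtot : ∫ x, E x = (2 * y + 1 / α) * Real.exp (-(2 * α * y)) := by
      have hsplit1 : (∫ x in Iic y, E x) + ∫ x in Ioi y, E x = ∫ x, E x :=
        intervalIntegral.integral_Iic_add_Ioi hE_int.integrableOn hE_int.integrableOn
      have hsplit2 : ∫ x in Iic y, E x = (∫ x in Iic (-y), E x) + ∫ x in Ioc (-y) y, E x := by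
        rw [← Iic_union_Ioc_eq_Iic (show -y ≤ y by linarith),
          setIntegral_union (Iic_disjoint_Ioc le_rfl) measurableSet_Ioc
            hE_int.integrableOn hE_int.integrableOn]
      rw [← hsplit1, hsplit2, hEIoi_int, hEIic_int, hEmid_int]
      field_simp
      ring
    have h1 : ∫ x, f x ≤ A ^ 2 * ∫ x, E x := by
      rw [← MeasureTheory.integral_const_mul]
      exact integral_mono hf_int (hE_int.const_mul _) hfub
    rw [hEtot] at h1
    refine h1.trans ?_
    have harg : Real.exp (-2 * α * y) = Real.exp (-(2 * α * y)) := by congr 1; ring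
    rw [harg]
    have h2 : 2 * y + 1 / α ≤ (2 + 1 / α) * (1 + y) := by
      have : (0:ℝ) < 1 / α := by positivity
      nlinarith
    calc A ^ 2 * ((2 * y + 1 / α) * Real.exp (-(2 * α * y)))
        = (A ^ 2 * Real.exp (-(2 * α * y))) * (2 * y + 1 / α) := by ring
      _ ≤ (A ^ 2 * Real.exp (-(2 * α * y))) * ((2 + 1 / α) * (1 + y)) :=
          mul_le_mul_of_nonneg_left h2 (mul_nonneg (sq_nonneg A) (Real.exp_pos _).le)
      _ = A ^ 2 * (2 + 1 / α) * (1 + y) * Real.exp (-(2 * α * y)) := by ring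
end

section
/- Let J : [0,∞) → (0,∞) be a C² function with J'(t) > 0 and J''(t) < 0 for all t ≥ 0, satisfying J'(t)/√(J(t)) ≤ -C₁ J''(t) for all t and some constant C₁ > 0. Then J is bounded on [0,∞), and there exist constants C₂, c > 0 such that J'(t) ≤ C₂ e^{-ct} for all t ≥ 0. -/
open Real Set

theorem concave_ode_exponential_decay
    (J J' J'' : ℝ → ℝ) (C₁ : ℝ) (hC₁ : 0 < C₁)
    (hd1 : ∀ t ∈ Ici (0:ℝ), HasDerivAt J (J' t) t)
    (hd2 : ∀ t ∈ Ici (0:ℝ), HasDerivAt J' (J'' t) t)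
    (hcont : ContinuousOn J'' (Ici (0:ℝ)))
    (hJpos : ∀ t ∈ Ici (0:ℝ), 0 < J t)
    (hJ'pos : ∀ t ∈ Ici (0:ℝ), 0 < J' t)
    (hJ''neg : ∀ t ∈ Ici (0:ℝ), J'' t < 0)
    (hineq : ∀ t ∈ Ici (0:ℝ), J' t / Real.sqrt (J t) ≤ -C₁ * J'' t) :
    (∃ B : ℝ, ∀ t ∈ Ici (0:ℝ), J t ≤ B) ∧
    ∃ C₂ c : ℝ, 0 < C₂ ∧ 0 < c ∧ ∀ t ∈ Ici (0:ℝ), J' t ≤ C₂ * Real.exp (-c * t) := by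
  have h0 : (0:ℝ) ∈ Ici (0:ℝ) := self_mem_Ici
  have hJ0 : 0 < J 0 := hJpos 0 h0
  have hJ'0 : 0 < J' 0 := hJ'pos 0 h0
  set S : ℝ := Real.sqrt (J 0) + C₁ * J' 0 / 2 with hSdef
  have hSpos : 0 < S := by
    have := Real.sqrt_pos.mpr hJ0
    positivity
  -- derivative of g = 2√J + C₁ J'
  set g : ℝ → ℝ := fun t => 2 * Real.sqrt (J t) + C₁ * J' t with hgdef
  have hg : ∀ t ∈ Ici (0:ℝ),
      HasDerivAt g (2 * (J' t / (2 * Real.sqrt (J t))) + C₁ * J'' t) t := by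
    intro t ht
    exact (((hd1 t ht).sqrt (ne_of_gt (hJpos t ht))).const_mul 2).add
      ((hd2 t ht).const_mul C₁)
  have hmem : ∀ x : ℝ, x ∈ interior (Ici (0:ℝ)) → x ∈ Ici (0:ℝ) := by
    intro x hx
    rw [interior_Ici] at hx
    exact le_of_lt (mem_Ioi.mp hx)
  have hganti : AntitoneOn g (Ici 0) := by
    apply antitoneOn_of_deriv_nonpos (convex_Ici 0)
    · exact fun t ht => (hg t ht).continuousAt.continuousWithinAt
    · exact fun x hx => ((hg x (hmem x hx)).differentiableAt).differentiableWithinAt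
    · intro x hx
      have hx' : x ∈ Ici (0:ℝ) := hmem x hx
      rw [(hg x hx').deriv]
      have hs : Real.sqrt (J x) ≠ 0 := ne_of_gt (Real.sqrt_pos.mpr (hJpos x hx'))
      have h2 : 2 * (J' x / (2 * Real.sqrt (J x))) = J' x / Real.sqrt (J x) := by
        field_simp
      rw [h2]
      have := hineq x hx'
      linarith
  have hsqrt_le : ∀ t ∈ Ici (0:ℝ), Real.sqrt (J t) ≤ S := by
    intro t ht
    have := hganti h0 ht ht
    have hJ't := hJ'pos t ht
    simp only [hgdef, hSdef] at this ⊢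
    nlinarith
  constructor
  · refine ⟨S ^ 2, fun t ht => ?_⟩
    have h1 := hsqrt_le t ht
    have h2 := Real.sq_sqrt (le_of_lt (hJpos t ht))
    have h3 := Real.sqrt_nonneg (J t)
    nlinarith
  · refine ⟨J' 0, 1 / (C₁ * S), hJ'0, by positivity, fun t ht => ?_⟩
    -- key pointwise bound
    have hkey : ∀ x ∈ Ici (0:ℝ), C₁ * S * J'' x + J' x ≤ 0 := by
      intro x hx
      have h := hineq x hx
      have hu : 0 < Real.sqrt (J x) := Real.sqrt_pos.mpr (hJpos x hx)
      rw [div_le_iff₀ hu] at h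
      have hu2 := hsqrt_le x hx
      have hJ''x := hJ''neg x hx
      nlinarith [mul_nonneg (mul_nonneg hC₁.le (neg_nonneg.mpr hJ''x.le))
        (sub_nonneg.mpr hu2)]
    set c : ℝ := 1 / (C₁ * S) with hcdef
    have hC₁S : 0 < C₁ * S := by positivity
    have hcpos : 0 < c := by positivity
    have hc1 : c * (C₁ * S) = 1 := by
      rw [hcdef]; field_simp
    set h : ℝ → ℝ := fun x => J' x * Real.exp (c * x) with hhdef
    have hh : ∀ x ∈ Ici (0:ℝ),
        HasDerivAt h (J'' x * Real.exp (c * x) + J' x * (Real.exp (c * x) * c)) x := by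
      intro x hx
      have he : HasDerivAt (fun y => Real.exp (c * y)) (Real.exp (c * x) * c) x := by
        simpa using ((hasDerivAt_id x).const_mul c).exp
      exact (hd2 x hx).mul he
    have hhanti : AntitoneOn h (Ici 0) := by
      apply antitoneOn_of_deriv_nonpos (convex_Ici 0)
      · exact fun x hx => (hh x hx).continuousAt.continuousWithinAt
      · exact fun x hx => ((hh x (hmem x hx)).differentiableAt).differentiableWithinAt
      · intro x hx
        have hx' : x ∈ Ici (0:ℝ) := hmem x hx
        rw [(hh x hx').deriv]
        have hk := hkey x hx'
        have he := Real.exp_pos (c * x)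
        have h3 : c * (C₁ * S * J'' x + J' x) ≤ 0 :=
          mul_nonpos_of_nonneg_of_nonpos hcpos.le hk
        have h4 : J'' x + c * J' x ≤ 0 := by
          rw [mul_add, ← mul_assoc, hc1, one_mul] at h3
          linarith
        nlinarith [mul_nonpos_of_nonneg_of_nonpos he.le h4]
    have hle := hhanti h0 ht ht
    simp only [hhdef, mul_zero, Real.exp_zero, mul_one] at hle
    have he := Real.exp_pos (c * t)
    rw [show -c * t = -(c * t) by ring, Real.exp_neg, le_mul_inv_iff₀ he]
    linarith
end
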